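/- arXiv:2410.17634 — 12 statements merged into one kernel-verified Lean document; each statement's English description precedes it below -/
import Mathlib

section
/- On V = K², there exists at most one trilinear map ⟨·,·,·⟩: V³ → V satisfying the Kirmse identities ⟨x,x,y⟩ = q(x)y = ⟨y,x,x⟩, where q(x) = α x₁² + β x₁x₂ + γ x₂² is a binary quadratic form. Explicitly, the first component of ⟨x,y,z⟩ is α x₁y₁z₁ + β x₁y₂z₁ + γ(x₁y₂z₂ + x₂y₂z₁ − x₂y₁z₂), and the second is γ x₂y₂z₂ + β x₂y₁z₂ + α(x₁y₁z₂ + x₂y₁z₁ − x₁y₂z₁). -/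
/-- Uniqueness of the Kirmse-compatible trilinear map on `K²` for the
binary quadratic form `q(x) = α x₁² + β x₁x₂ + γ x₂²`: any trilinear map satisfying
the Kirmse identities is given by the explicit component formula. -/
theorem stmt3 {K : Type*} [CommRing K] (α β γ : K)
    (T : K × K →ₗ[K] K × K →ₗ[K] K × K →ₗ[K] K × K)
    (hK : ∀ x y : K × K,
      T x x y = (α * x.1 ^ 2 + β * x.1 * x.2 + γ * x.2 ^ 2) • y ∧
      T y x x = (α * x.1 ^ 2 + β * x.1 * x.2 + γ * x.2 ^ 2) • y) :
    ∀ x y z : K × K, T x y z =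
      (α * x.1 * y.1 * z.1 + β * x.1 * y.2 * z.1 +
         γ * (x.1 * y.2 * z.2 + x.2 * y.2 * z.1 - x.2 * y.1 * z.2),
       γ * x.2 * y.2 * z.2 + β * x.2 * y.1 * z.2 +
         α * (x.1 * y.1 * z.2 + x.2 * y.1 * z.1 - x.1 * y.2 * z.1)) := by
  set e₁ : K × K := (1, 0) with he₁
  set e₂ : K × K := (0, 1) with he₂
  have h1 : ∀ z, T e₁ e₁ z = α • z := fun z => by simpa [he₁] using (hK e₁ z).1
  have h2 : ∀ z, T e₂ e₂ z = γ • z := fun z => by simpa [he₂] using (hK e₂ z).1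
  have h4 : ∀ z, T z e₁ e₁ = α • z := fun z => by simpa [he₁] using (hK e₁ z).2
  have h5 : ∀ z, T z e₂ e₂ = γ • z := fun z => by simpa [he₂] using (hK e₂ z).2
  have h3 : ∀ z, T e₁ e₂ z + T e₂ e₁ z = β • z := by
    intro z
    have h := (hK (e₁ + e₂) z).1
    simp only [map_add, LinearMap.add_apply, h1 z, h2 z] at h
    simp [he₁, he₂] at h
    linear_combination (norm := module) h
  have v121 : T e₁ e₂ e₁ = β • e₁ - α • e₂ := by
    have h := h3 e₁
    rw [h4 e₂] at h
    linear_combination (norm := module) h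
  have v212 : T e₂ e₁ e₂ = β • e₂ - γ • e₁ := by
    have h := h3 e₂
    rw [h5 e₁] at h
    linear_combination (norm := module) h
  intro x y z
  have hx : x = x.1 • e₁ + x.2 • e₂ := by ext <;> simp [he₁, he₂]
  have hy : y = y.1 • e₁ + y.2 • e₂ := by ext <;> simp [he₁, he₂]
  have hz : z = z.1 • e₁ + z.2 • e₂ := by ext <;> simp [he₁, he₂]
  calc T x y z = T (x.1 • e₁ + x.2 • e₂) (y.1 • e₁ + y.2 • e₂) (z.1 • e₁ + z.2 • e₂) := by
        rw [← hx, ← hy, ← hz]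
    _ = _ := by
        simp only [map_add, map_smul, LinearMap.add_apply, LinearMap.smul_apply,
          h1, h2, h4 e₂, h5 e₁, v121, v212]
        ext <;> simp [he₁, he₂] <;> ring
end

section
/- The unique Kirmse-compatible trilinear product on K² associated to a binary quadratic form q(x) = αx₁² + βx₁x₂ + γx₂² (given by the explicit component formula) is commutative (⟨x,y,z⟩ = ⟨z,y,x⟩) and para-associative: ⟨a,b,⟨c,d,e⟩⟩ = ⟨a,⟨d,c,b⟩,e⟩ = ⟨⟨a,b,c⟩,d,e⟩ for all a,b,c,d,e ∈ K². -/
/-- The canonical trilinear product on `K²` associated to the binary quadratic form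
`q(x) = α x₁² + β x₁x₂ + γ x₂²`. -/
def triK {K : Type*} [CommRing K] (α β γ : K) (x y z : K × K) : K × K :=
  (α * x.1 * y.1 * z.1 + β * x.1 * y.2 * z.1 +
     γ * (x.1 * y.2 * z.2 + x.2 * y.2 * z.1 - x.2 * y.1 * z.2),
   γ * x.2 * y.2 * z.2 + β * x.2 * y.1 * z.2 +
     α * (x.1 * y.1 * z.2 + x.2 * y.1 * z.1 - x.1 * y.2 * z.1))

/-- The canonical trilinear product on `K²` is commutative and
para-associative. -/
theorem stmt4 {K : Type*} [CommRing K] (α β γ : K) :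
    (∀ x y z : K × K, triK α β γ x y z = triK α β γ z y x) ∧
    (∀ a b c d e : K × K,
      triK α β γ a b (triK α β γ c d e) = triK α β γ a (triK α β γ d c b) e ∧
      triK α β γ a b (triK α β γ c d e) = triK α β γ (triK α β γ a b c) d e) := by
  refine ⟨fun x y z => ?_, fun a b c d e => ⟨?_, ?_⟩⟩ <;> simp only [triK, Prod.mk.injEq] <;> constructor <;> ring
end

section
/- The canonical trilinear product on (K², q) satisfies the ternary composition law q(⟨x,y,z⟩) = q(x)·q(y)·q(z) for all x,y,z ∈ K². -/
/-- The canonical trilinear product on `(K², q)` satisfies the ternary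
composition law `q(⟨x,y,z⟩) = q(x) q(y) q(z)`. -/
theorem stmt5 {K : Type*} [CommRing K] (α β γ : K)
    (q : K × K → K) (hq : ∀ x, q x = α * x.1 ^ 2 + β * x.1 * x.2 + γ * x.2 ^ 2) :
    ∀ x y z : K × K, q (triK α β γ x y z) = q x * q y * q z := by
  intro x y z
  simp only [hq, triK]
  ring
end

section
/- Let a, b be linearly independent in K² and q a binary quadratic form such that there exists a linear map S: K² → K² with S(a) = q(a)·b and S(b) = q(b)·a. Then S is a q-similarity with ratio q(a)q(b): for all x ∈ K², q(S(x)) = q(a)·q(b)·q(x). -/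
/-- If `a, b` are linearly independent in `K²` (they form a free basis)
and `S` is a linear map with `S a = q(a) • b` and `S b = q(b) • a`, then `S` is a
`q`-similarity of ratio `q(a) q(b)`. -/
theorem stmt7 {K : Type*} [CommRing K] (q : QuadraticForm K (K × K)) (a b : K × K)
    (hbasis : ∀ x : K × K, ∃! u : K × K, x = u.1 • a + u.2 • b)
    (S : K × K →ₗ[K] K × K) (hSa : S a = q a • b) (hSb : S b = q b • a) :
    ∀ x, q (S x) = q a * q b * q x := by
  have key : ∀ s t : K, q (s • a + t • b)
      = s^2 * q a + t^2 * q b + s * t * QuadraticMap.polar q a b := by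
    intro s t
    rw [QuadraticMap.map_add (f := ⇑q), QuadraticMap.map_smul, QuadraticMap.map_smul,
      QuadraticMap.polar_smul_left, QuadraticMap.polar_smul_right]
    simp only [smul_eq_mul]
    ring
  intro x
  obtain ⟨u, hu, -⟩ := hbasis x
  rw [hu]
  have hS : S (u.1 • a + u.2 • b) = (u.2 * q b) • a + (u.1 * q a) • b := by
    simp [map_add, map_smul, hSa, hSb, smul_smul]
    abel
  rw [hS, key, key, QuadraticMap.polar_comm]
  ring
end

section
/- Let (V, q, ⟨·,·,·⟩) be a group spherical space. Then the set V^× = {x ∈ V : q(x) ∈ K^×} with the product (x,y,z) ↦ ⟨x,y,z⟩ / q(y) is a torsor: it satisfies (x,x,y) ↦ y, (y,x,x) ↦ y, and the para-associative law. Moreover each sphere S(c) = q⁻¹(c) with c ∈ K^× is closed under this product. -/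
/-- In a group spherical space `(V, q, ⟨·,·,·⟩)`, the set
`V^× = {x | q x is a unit}` with `(x,y,z) ↦ ⟨x,y,z⟩ / q(y)` is a torsor
(idempotency and para-associativity hold), and every sphere `q⁻¹(c)` with `c` a
unit is closed under this product. -/
theorem stmt9 {K V : Type*} [CommRing K] [AddCommGroup V] [Module K V]
    (q : QuadraticForm K V) (T : V →ₗ[K] V →ₗ[K] V →ₗ[K] V)
    (hKir : ∀ x y, T x x y = q x • y ∧ T y x x = q x • y)
    (hPA : ∀ a b c d e,
      T a b (T c d e) = T a (T d c b) e ∧ T a b (T c d e) = T (T a b c) d e)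
    (hTC : ∀ x y z, q (T x y z) = q x * q y * q z)
    (hne : ∃ x : V, IsUnit (q x))
    (p : V → V → V → V)
    (hp : ∀ x y z, p x y z = Ring.inverse (q y) • T x y z) :
    (∀ x y, IsUnit (q x) → p x x y = y ∧ p y x x = y) ∧
    (∀ a b c d e, IsUnit (q b) → IsUnit (q c) → IsUnit (q d) →
      p a b (p c d e) = p a (p d c b) e ∧ p a b (p c d e) = p (p a b c) d e) ∧
    (∀ c : K, IsUnit c → ∀ x y z, q x = c → q y = c → q z = c → q (p x y z) = c) := by
  refine ⟨?_, ?_, ?_⟩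
  · intro x y hx
    constructor
    · rw [hp, (hKir x y).1, smul_smul, Ring.inverse_mul_cancel _ hx, one_smul]
    · rw [hp, (hKir x y).2, smul_smul, Ring.inverse_mul_cancel _ hx, one_smul]
  · intro a b c d e hb hc hd
    have hic : Ring.inverse (q c) * q c = 1 := Ring.inverse_mul_cancel _ hc
    have hid : Ring.inverse (q d) * q d = 1 := Ring.inverse_mul_cancel _ hd
    have hib : Ring.inverse (q b) * q b = 1 := Ring.inverse_mul_cancel _ hb
    -- LHS
    have hL : p a b (p c d e) =
        (Ring.inverse (q b) * Ring.inverse (q d)) • T a b (T c d e) := by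
      rw [hp, hp, map_smul, smul_smul]
    constructor
    · -- first para-associative law
      have hq : q (p d c b) = Ring.inverse (q c) * Ring.inverse (q c) * (q d * q c * q b) := by
        rw [hp, QuadraticMap.map_smul, hTC, smul_eq_mul]
      have hA : IsUnit (q (p d c b)) := by
        rw [hq]
        exact ((isUnit_ringInverse.mpr hc).mul (isUnit_ringInverse.mpr hc)).mul
          ((hd.mul hc).mul hb)
      have hinv : Ring.inverse (q (p d c b)) =
          q c * Ring.inverse (q d) * Ring.inverse (q b) := by
        have hmul : q (p d c b) * (q c * Ring.inverse (q d) * Ring.inverse (q b)) = 1 := by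
          rw [hq]
          calc Ring.inverse (q c) * Ring.inverse (q c) * (q d * q c * q b) *
                (q c * Ring.inverse (q d) * Ring.inverse (q b))
              = (Ring.inverse (q c) * q c) * ((Ring.inverse (q c) * q c) *
                ((Ring.inverse (q d) * q d) * (Ring.inverse (q b) * q b))) := by ring
            _ = 1 := by rw [hic, hid, hib]; ring
        calc Ring.inverse (q (p d c b))
            = Ring.inverse (q (p d c b)) * (q (p d c b) *
              (q c * Ring.inverse (q d) * Ring.inverse (q b))) := by rw [hmul, mul_one]
          _ = (Ring.inverse (q (p d c b)) * q (p d c b)) *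
              (q c * Ring.inverse (q d) * Ring.inverse (q b)) := by ring
          _ = q c * Ring.inverse (q d) * Ring.inverse (q b) := by
              rw [Ring.inverse_mul_cancel _ hA, one_mul]
      have hR : p a (p d c b) e =
          (Ring.inverse (q (p d c b)) * Ring.inverse (q c)) • T a (T d c b) e := by
        rw [hp, hp]
        have : T a (Ring.inverse (q c) • T d c b) = Ring.inverse (q c) • T a (T d c b) :=
          map_smul (T a) _ _
        rw [this, LinearMap.smul_apply, smul_smul]
      rw [hL, hR, (hPA a b c d e).1, hinv]
      congr 1
      linear_combination (-(Ring.inverse (q d) * Ring.inverse (q b))) * hic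
    · -- second para-associative law
      have hR : p (p a b c) d e =
          (Ring.inverse (q d) * Ring.inverse (q b)) • T (T a b c) d e := by
        rw [hp, hp]
        have : T (Ring.inverse (q b) • T a b c) = Ring.inverse (q b) • T (T a b c) :=
          map_smul T _ _
        rw [this, LinearMap.smul_apply, LinearMap.smul_apply, smul_smul]
      rw [hL, hR, (hPA a b c d e).2]
      congr 1
      ring
  · intro c hc x y z hx hy hz
    have h1 : Ring.inverse c * c = 1 := Ring.inverse_mul_cancel _ hc
    rw [hp, QuadraticMap.map_smul, hTC, hx, hy, hz, smul_eq_mul]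
    linear_combination (c * (Ring.inverse c * c + 1)) * h1
end

section
/- In a group spherical space, the right multiplication operators R_{a,b}(x) := ⟨x,b,a⟩ satisfy: R_{a,b}² = b_q(a,b)·R_{a,b} − q(a)q(b)·id, R_{a,b} ∘ R_{b,c} = q(b)·R_{a,c}, R_{a,b} ∘ R_{b,a} = q(a)q(b)·id, and R_{a,b} + R_{b,a} = b_q(a,b)·id. Consequently, if q(a)q(b) ∈ K^×, then R_{a,b} is invertible with inverse R_{b,a}/(q(a)q(b)). -/
/-- Identities for the right multiplication operators
`R_{a,b}(x) = ⟨x,b,a⟩` in a group spherical space, and invertibility of `R_{a,b}`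
when `q(a)q(b)` is a unit, with inverse `R_{b,a}/(q(a)q(b))`. -/
theorem stmt10 {K V : Type*} [CommRing K] [AddCommGroup V] [Module K V]
    (q : QuadraticForm K V) (T : V →ₗ[K] V →ₗ[K] V →ₗ[K] V)
    (hKir : ∀ x y, T x x y = q x • y ∧ T y x x = q x • y)
    (hPA : ∀ a b c d e,
      T a b (T c d e) = T a (T d c b) e ∧ T a b (T c d e) = T (T a b c) d e) :
    (∀ a b x, T (T x b a) b a = QuadraticMap.polar q a b • T x b a - (q a * q b) • x) ∧
    (∀ a b c x, T (T x c b) b a = q b • T x c a) ∧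
    (∀ a b x, T (T x a b) b a = (q a * q b) • x) ∧
    (∀ a b x, T x b a + T x a b = QuadraticMap.polar q a b • x) ∧
    (∀ a b, IsUnit (q a * q b) →
      ∀ x, Ring.inverse (q a * q b) • T (T x b a) a b = x ∧
        T (Ring.inverse (q a * q b) • T x a b) b a = x) := by
  -- polarization of Kirmse:
  have hpol : ∀ a b x, T x b a + T x a b = QuadraticMap.polar q a b • x := by
    intro a b x
    have h := (hKir (a + b) x).2
    simp only [map_add, LinearMap.add_apply] at h
    rw [(hKir a x).2, (hKir b x).2] at h
    have : T x a b + T x b a = (q (a + b) - q a - q b) • x := by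
      rw [sub_smul, sub_smul]
      rw [← h]; abel
    rw [QuadraticMap.polar]
    rw [add_comm] at this
    rw [this]
  -- composition law:
  have hcomp : ∀ a b c x, T (T x c b) b a = q b • T x c a := by
    intro a b c x
    have h := (hPA x c (b) b a).2
    rw [← h, (hKir b a).1, map_smul]
  have hsq : ∀ a b x, T (T x a b) b a = (q a * q b) • x := by
    intro a b x
    rw [hcomp a b a x, (hKir a x).2, smul_smul, mul_comm]
  refine ⟨?_, hcomp, hsq, hpol, ?_⟩
  · intro a b x
    have h := (hPA x b a b a).2
    have hab : T a b a = QuadraticMap.polar q a b • a - q a • b := by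
      have := hpol b a a
      rw [(hKir a b).1, QuadraticMap.polar_comm] at this
      linear_combination (norm := module) this
    rw [← h, hab, map_sub, map_smul, map_smul, (hKir b x).2, smul_smul]
  · intro a b hu x
    have h1 : T (T x b a) a b = (q a * q b) • x := by
      rw [hsq b a x, mul_comm]
    constructor
    · rw [h1, smul_smul, Ring.inverse_mul_cancel _ hu, one_smul]
    · rw [map_smul, LinearMap.smul_apply, LinearMap.smul_apply, hsq,
        smul_smul, Ring.inverse_mul_cancel _ hu, one_smul]
end

section
/- In a group spherical space, the middle multiplication operators S_{a,b}(y) := ⟨a,y,b⟩ satisfy S_{a,b} ∘ S_{u,v} ∘ S_{y,z} = S_{⟨a,v,y⟩, ⟨z,u,b⟩} and S_{a,b} ∘ S_{b,a} = q(a)q(b)·id. -/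
/-- For the middle multiplication operators `S_{a,b}(y) = ⟨a,y,b⟩` in a
group spherical space: `S_{a,b} ∘ S_{u,v} ∘ S_{y,z} = S_{⟨a,v,y⟩, ⟨z,u,b⟩}` and
`S_{a,b} ∘ S_{b,a} = q(a) q(b) • id`. -/
theorem stmt11 {K V : Type*} [CommRing K] [AddCommGroup V] [Module K V]
    (q : QuadraticForm K V) (T : V →ₗ[K] V →ₗ[K] V →ₗ[K] V)
    (hKir : ∀ x y, T x x y = q x • y ∧ T y x x = q x • y)
    (hPA : ∀ a b c d e,
      T a b (T c d e) = T a (T d c b) e ∧ T a b (T c d e) = T (T a b c) d e) :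
    (∀ a b u v y z w, T a (T u (T y w z) v) b = T (T a v y) w (T z u b)) ∧
    (∀ a b y, T a (T b y a) b = (q a * q b) • y) := by
  constructor
  · intro a b u v y z w
    rw [← (hPA a v (T y w z) u b).1, ← (hPA y w z u b).2, (hPA a v y w (T z u b)).2]
  · intro a b y
    rw [← (hPA a a y b b).1, (hKir b y).2, map_smul, (hKir a y).1, smul_smul,
      mul_comm]
end

section
/- Let (V,q,⟨·,·,·⟩) be a group spherical space and e ∈ V with q(e) ∈ K^×. Define x·z := ⟨x,e,z⟩/q(e) and x^♯ := ⟨e,x,e⟩/q(e). Then (V,·) is an associative unital algebra with unit e, ♯ is an anti-automorphism of order 2, x + x^♯ = (b_q(x,e)/q(e))·e, and x·x^♯ = (q(x)/q(e))·e; i.e. ♯ is a scalar involution and (V,·,♯) is a generalized composition algebra with norm N(x) = q(x)/q(e). -/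
/-- Fixing a base point `e` with `q e` invertible in a group spherical
space, the homotope product `x·z = ⟨x,e,z⟩/q(e)` is associative with unit `e`, the map
`x^♯ = ⟨e,x,e⟩/q(e)` is an anti-automorphism of order 2, and `♯` is a scalar
involution: `x + x^♯ = (b_q(x,e)/q(e)) • e` and `x·x^♯ = (q(x)/q(e)) • e`. -/
theorem stmt12 {K V : Type*} [CommRing K] [AddCommGroup V] [Module K V]
    (q : QuadraticForm K V) (T : V →ₗ[K] V →ₗ[K] V →ₗ[K] V)
    (hKir : ∀ x y, T x x y = q x • y ∧ T y x x = q x • y)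
    (hPA : ∀ a b c d e,
      T a b (T c d e) = T a (T d c b) e ∧ T a b (T c d e) = T (T a b c) d e)
    (e : V) (h : Invertible (q e))
    (mul : V → V → V) (hmul : ∀ x z, mul x z = ⅟(q e) • T x e z)
    (sharp : V → V) (hsharp : ∀ x, sharp x = ⅟(q e) • T e x e) :
    (∀ x y z, mul (mul x y) z = mul x (mul y z)) ∧
    (∀ x, mul e x = x ∧ mul x e = x) ∧
    (∀ x, sharp (sharp x) = x) ∧
    (∀ x y, sharp (mul x y) = mul (sharp y) (sharp x)) ∧
    (∀ x, x + sharp x = (⅟(q e) * QuadraticMap.polar q x e) • e) ∧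
    (∀ x, mul x (sharp x) = (⅟(q e) * q x) • e) := by
  have hK1 : ∀ x y : V, T x x y = q x • y := fun x y => (hKir x y).1
  have hK2 : ∀ x y : V, T y x x = q x • y := fun x y => (hKir x y).2
  have hPA1 : ∀ a b c d f : V, T a b (T c d f) = T a (T d c b) f :=
    fun a b c d f => (hPA a b c d f).1
  have hPA2 : ∀ a b c d f : V, T a b (T c d f) = T (T a b c) d f :=
    fun a b c d f => (hPA a b c d f).2
  have inv_smul : ∀ v : V, ⅟(q e) • (q e • v) = v := fun v => by
    rw [smul_smul, invOf_mul_self, one_smul]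
  have key : ⅟(q e) * ⅟(q e) * q e = ⅟(q e) := by
    rw [mul_assoc, invOf_mul_self, mul_one]
  -- key formula for sharp
  have hTsharp : ∀ x : V, T e x e = QuadraticMap.polar q x e • e - q e • x := by
    intro x
    have h0 := hK1 (x + e) e
    simp only [map_add, LinearMap.add_apply] at h0
    rw [hK1 x e, hK2 e x, hK1 e e] at h0
    have hp : QuadraticMap.polar q x e = q (x + e) - q x - q e := rfl
    rw [hp, sub_smul, sub_smul, ← h0]
    abel
  refine ⟨?_, ?_, ?_, ?_, ?_, ?_⟩
  · intro x y z
    rw [hmul, hmul, hmul, hmul, map_smul, LinearMap.smul_apply, LinearMap.smul_apply,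
      map_smul]
    rw [hPA2 x e y e z]
  · intro x
    constructor
    · rw [hmul, hK1 e x, inv_smul]
    · rw [hmul, hK2 e x, inv_smul]
  · intro x
    rw [hsharp, hsharp]
    simp only [map_smul, LinearMap.smul_apply]
    rw [← hPA1 e e x e e, hK2 e x, map_smul, hK1 e x]
    rw [smul_smul, smul_smul, key, inv_smul]
  · intro x y
    rw [hsharp, hmul, hmul, hsharp, hsharp]
    simp only [map_smul, LinearMap.smul_apply]
    have h1 : T e (T x e y) e = T e y (T e x e) := (hPA1 e y e x e).symm
    have h2 : T (T e y e) e (T e x e) = T e y (T e e (T e x e)) :=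
      (hPA2 e y e e (T e x e)).symm
    rw [h1, h2, hK1 e (T e x e), map_smul, inv_smul]
  · intro x
    rw [hsharp, hTsharp, smul_sub, inv_smul, smul_smul]
    abel
  · intro x
    rw [hmul, hsharp]
    simp only [map_smul, LinearMap.smul_apply]
    rw [hPA2 x e e x e, hK2 e x]
    simp only [map_smul, LinearMap.smul_apply]
    rw [hK1 x e, smul_smul, smul_smul, key, smul_smul]
end

section
/- In a group spherical space with base point e ∈ V^×, the map v ↦ L(v) := L_{v,e}/q(e) is an algebra isomorphism from the homotope algebra (V, ·_e) (with x·_e z = ⟨x,e,z⟩/q(e)) onto the left spiration algebra generated by the operators L_{x,y}(z) = ⟨x,y,z⟩, with inverse f ↦ f(e). -/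
/-- In a group spherical space with base point `e ∈ V^×`, the map
`v ↦ L(v) = L_{v,e}/q(e)` is an algebra isomorphism from the homotope algebra
`(V, ·_e)` onto the left spiration algebra (the span of the operators
`L_{x,y} = ⟨x,y,·⟩`), with inverse `f ↦ f e`. -/
theorem stmt15 {K V : Type*} [CommRing K] [AddCommGroup V] [Module K V]
    (q : QuadraticForm K V) (T : V →ₗ[K] V →ₗ[K] V →ₗ[K] V)
    (hKir : ∀ x y, T x x y = q x • y ∧ T y x x = q x • y)
    (hPA : ∀ a b c d e,
      T a b (T c d e) = T a (T d c b) e ∧ T a b (T c d e) = T (T a b c) d e)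
    (e : V) (h : Invertible (q e))
    (C : Submodule K (Module.End K V))
    (hC : C = Submodule.span K {f : Module.End K V | ∃ x y : V, f = T x y})
    (mulE : V → V → V) (hmulE : ∀ x z, mulE x z = ⅟(q e) • T x e z)
    (L : V → Module.End K V) (hL : ∀ v, L v = ⅟(q e) • (T v e : Module.End K V)) :
    (∀ v, L v ∈ C) ∧
    (∀ v, L v e = v) ∧
    (∀ f ∈ C, L (f e) = f) ∧
    (∀ v w, L (mulE v w) = L v * L w) ∧
    (∀ v w, L (v + w) = L v + L w) ∧
    (∀ (r : K) (v : V), L (r • v) = r • L v) := by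
  have Tee : ∀ v : V, T v e e = q e • v := fun v => (hKir e v).2
  have Te2 : ∀ z : V, T e e z = q e • z := fun z => (hKir e z).1
  have hLmem : ∀ v, L v ∈ C := by
    intro v
    rw [hL, hC]
    exact Submodule.smul_mem _ _ (Submodule.subset_span ⟨v, e, rfl⟩)
  have hLe : ∀ v, L v e = v := by
    intro v
    rw [hL]
    show ⅟(q e) • (T v e e) = v
    rw [Tee, smul_smul, invOf_mul_self, one_smul]
  have hLadd : ∀ v w, L (v + w) = L v + L w := by
    intro v w
    rw [hL, hL, hL, map_add, LinearMap.add_apply, smul_add]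
  have hLsmul : ∀ (r : K) (v : V), L (r • v) = r • L v := by
    intro r v
    rw [hL, hL, map_smul, LinearMap.smul_apply, smul_comm]
  have hLinv : ∀ f ∈ C, L (f e) = f := by
    intro f hf
    rw [hC] at hf
    induction hf using Submodule.span_induction with
    | mem g hg =>
        obtain ⟨x, y, rfl⟩ := hg
        rw [hL]
        ext z
        show ⅟(q e) • T (T x y e) e z = T x y z
        rw [← (hPA x y e e z).2, Te2, map_smul, smul_smul, invOf_mul_self, one_smul]
    | zero =>
        rw [LinearMap.zero_apply, hL, map_zero]
        simp
    | add g₁ g₂ _ _ h1 h2 =>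
        rw [LinearMap.add_apply, hLadd, h1, h2]
    | smul r g _ hg =>
        rw [LinearMap.smul_apply, hLsmul, hg]
  refine ⟨hLmem, hLe, hLinv, ?_, hLadd, hLsmul⟩
  intro v w
  rw [hmulE, hLsmul, hL, hL, hL]
  ext z
  show ⅟(q e) • (⅟(q e) • T (T v e w) e z) =
    ⅟(q e) • T v e (⅟(q e) • T w e z)
  rw [← (hPA v e w e z).2, map_smul]
end

section
/- Let V₁, V₂ be K-modules and b: V₁ × V₂ → K bilinear, with b of rank at most 1 (i.e. b(x,y) = φ(x)ψ(y) for linear forms φ, ψ). Then the trilinear product on V = V₁ ⊕ V₂ defined componentwise by ⟨x,y,z⟩ = (b(z₁,y₂)x₁ − b(z₁,x₂)y₁ + b(y₁,x₂)z₁, b(y₁,z₂)x₂ − b(x₁,z₂)y₂ + b(x₁,y₂)z₂) is para-associative and satisfies the Kirmse identities for q(x) = b(x₁,x₂). -/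
/-- For a rank-at-most-one bilinear form `b(x,y) = φ(x)ψ(y)` on
`V₁ × V₂`, the componentwise trilinear product of a polarized space is
para-associative and satisfies the Kirmse identities for `q(x) = b(x₁,x₂)`. -/
theorem stmt16 {K V₁ V₂ : Type*} [CommRing K]
    [AddCommGroup V₁] [Module K V₁] [AddCommGroup V₂] [Module K V₂]
    (φ : V₁ →ₗ[K] K) (ψ : V₂ →ₗ[K] K)
    (b : V₁ → V₂ → K) (hb : ∀ u v, b u v = φ u * ψ v)
    (q : V₁ × V₂ → K) (hq : ∀ x, q x = b x.1 x.2)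
    (T : V₁ × V₂ → V₁ × V₂ → V₁ × V₂ → V₁ × V₂)
    (hT : ∀ x y z, T x y z =
      (b z.1 y.2 • x.1 - b z.1 x.2 • y.1 + b y.1 x.2 • z.1,
       b y.1 z.2 • x.2 - b x.1 z.2 • y.2 + b x.1 y.2 • z.2)) :
    (∀ x z, T x x z = q x • z ∧ T z x x = q x • z) ∧
    (∀ a b' c d e,
      T a b' (T c d e) = T a (T d c b') e ∧ T a b' (T c d e) = T (T a b' c) d e) := by
  simp only [hT, hq, hb, Prod.smul_mk, Prod.mk.injEq, map_add, map_sub, map_smul,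
    smul_eq_mul, Prod.smul_fst, Prod.smul_snd]
  constructor
  · intro x z
    constructor <;>
      (refine Prod.ext ?_ ?_ <;>
        simp only [Prod.smul_fst, Prod.smul_snd, smul_eq_mul] <;> module)
  · intro a b' c d e
    refine ⟨⟨?_, ?_⟩, ⟨?_, ?_⟩⟩ <;> module
end

section
/- Let V be a K-module and φ, ψ: V → K two linear forms, q(x) := φ(x)ψ(x). Then the trilinear product ⟨x,y,z⟩ := φ(x)ψ(y)z + ψ(z)φ(y)x − φ(x)ψ(z)y satisfies the Kirmse identities ⟨x,x,z⟩ = q(x)z = ⟨z,x,x⟩, para-associativity, and the composition law q(⟨x,y,z⟩) = q(x)q(y)q(z). -/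
/-- For linear forms `φ, ψ : V → K` and `q(x) = φ(x)ψ(x)`, the trilinear
product `⟨x,y,z⟩ = φ(x)ψ(y)z + ψ(z)φ(y)x − φ(x)ψ(z)y` satisfies the Kirmse
identities, para-associativity and the composition law. -/
theorem stmt17 {K V : Type*} [CommRing K] [AddCommGroup V] [Module K V]
    (φ ψ : V →ₗ[K] K)
    (q : V → K) (hq : ∀ x, q x = φ x * ψ x)
    (T : V → V → V → V)
    (hT : ∀ x y z, T x y z = (φ x * ψ y) • z + (ψ z * φ y) • x - (φ x * ψ z) • y) :
    (∀ x z, T x x z = q x • z ∧ T z x x = q x • z) ∧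
    (∀ a b c d e,
      T a b (T c d e) = T a (T d c b) e ∧ T a b (T c d e) = T (T a b c) d e) ∧
    (∀ x y z, q (T x y z) = q x * q y * q z) := by
  refine ⟨fun x z => ⟨?_, ?_⟩, fun a b c d e => ⟨?_, ?_⟩, fun x y z => ?_⟩ <;>
    simp only [hT, hq, map_add, map_sub, map_smul, smul_eq_mul, smul_add, smul_sub,
      smul_smul] <;>
    first
      | module
      | ring
end

section
/- Let G be a group with a central involution ♯ (an anti-automorphism of order 2 with g·g^♯ central for all g), and let ε, μ be central elements fixed by ♯ with ε² = e. Define on D(G) = G × Z/2Z the graded product: x₀∙y₀ = (xy)₀, x₀∙y₁ = (yx)₁, x₁∙y₀ = (xy^♯)₁, x₁∙y₁ = (με·y^♯x)₀. Then D(G) with this product is a Moufang loop with unit e₀: the Moufang identity z∙(x∙(z∙y)) = ((z∙x)∙z)∙y holds for all elements, e₀ is a two-sided unit, and every element has a two-sided inverse. -/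
/-- The graded product on the double `D(G) = G × ℤ/2ℤ` of a group `G` with
involution `sharp` and central parameters `ε, μ`. -/
def dmul {G : Type*} [Group G] (sharp : G → G) (ε μ : G)
    (x y : G × ZMod 2) : G × ZMod 2 :=
  if x.2 = 0 then
    (if y.2 = 0 then (x.1 * y.1, 0) else (y.1 * x.1, 1))
  else
    (if y.2 = 0 then (x.1 * sharp y.1, 1) else (μ * ε * (sharp y.1 * x.1), 0))

/-- The Moufang double of a group: for a group `G` with central
involution `♯` and central elements `ε, μ` fixed by `♯` with `ε² = 1`, the graded
product on `D(G) = G × ℤ/2ℤ` makes `D(G)` a Moufang loop with unit `(1,0)`: the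
Moufang identity holds, `(1,0)` is a two-sided unit, every element has a two-sided
inverse, and all translations are bijective. -/
theorem stmt19 {G : Type*} [Group G] (sharp : G → G) (ε μ : G)
    (hanti : ∀ g h, sharp (g * h) = sharp h * sharp g)
    (hinvol : ∀ g, sharp (sharp g) = g)
    (hcentral : ∀ g h, (g * sharp g) * h = h * (g * sharp g))
    (hεc : ∀ h, ε * h = h * ε) (hμc : ∀ h, μ * h = h * μ)
    (hεf : sharp ε = ε) (hμf : sharp μ = μ) (hε2 : ε * ε = 1) :
    (∀ x y z : G × ZMod 2,
      dmul sharp ε μ z (dmul sharp ε μ x (dmul sharp ε μ z y)) =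
        dmul sharp ε μ (dmul sharp ε μ (dmul sharp ε μ z x) z) y) ∧
    (∀ x : G × ZMod 2, dmul sharp ε μ (1, 0) x = x ∧ dmul sharp ε μ x (1, 0) = x) ∧
    (∀ x : G × ZMod 2, ∃ y, dmul sharp ε μ x y = (1, 0) ∧ dmul sharp ε μ y x = (1, 0)) ∧
    (∀ a : G × ZMod 2, Function.Bijective (fun x => dmul sharp ε μ a x)) ∧
    (∀ a : G × ZMod 2, Function.Bijective (fun x => dmul sharp ε μ x a)) := by
  have hz2 : ∀ t : ZMod 2, t = 0 ∨ t = 1 := by decide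
  -- helper lemmas
  have h1 : sharp 1 = 1 := by
    have := hanti 1 1
    rw [one_mul] at this
    exact (mul_left_cancel (a := sharp 1) (by rw [mul_one, ← this])).symm
  have hsinv : ∀ g : G, sharp g⁻¹ = (sharp g)⁻¹ := by
    intro g
    have : sharp g⁻¹ * sharp g = 1 := by rw [← hanti, mul_inv_cancel, h1]
    exact eq_inv_of_mul_eq_one_left this
  have A1 : ∀ x y : G, x * (ε * y) = ε * (x * y) := by
    intro x y; rw [← mul_assoc, ← hεc, mul_assoc]
  have A2 : ∀ x : G, x * ε = ε * x := fun x => (hεc x).symm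
  have A3 : ∀ x y : G, x * (μ * y) = μ * (x * y) := by
    intro x y; rw [← mul_assoc, ← hμc, mul_assoc]
  have A4 : ∀ x : G, x * μ = μ * x := fun x => (hμc x).symm
  have S2 : ∀ g : G, sharp g * g = g * sharp g := by
    intro g
    have := hcentral g g
    rw [mul_assoc] at this
    exact mul_left_cancel this
  have S1 : ∀ (g x : G), sharp g * (g * x) = g * (sharp g * x) := by
    intro g x; rw [← mul_assoc, S2, mul_assoc]
  have S3 : ∀ (g x : G), g * (sharp g * x) = x * (g * sharp g) := by
    intro g x; rw [← mul_assoc, hcentral]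
  refine ⟨?_, ?_, ?_, ?_, ?_⟩
  · -- Moufang identity
    rintro ⟨a, α⟩ ⟨b, β⟩ ⟨c, γ⟩
    rcases hz2 α with rfl|rfl <;> rcases hz2 β with rfl|rfl <;> rcases hz2 γ with rfl|rfl <;>
      simp [dmul, Prod.ext_iff] <;>
      simp only [hanti, hinvol, hεf, hμf, mul_assoc] <;>
      (try simp only [S1, S2, S3, mul_assoc]) <;>
      (try simp only [A3, A4, mul_assoc]) <;>
      (try simp only [A1, A2, mul_assoc]) <;>
      (try simp only [S1, S2, S3, mul_assoc])
  · -- unit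
    rintro ⟨a, α⟩
    rcases hz2 α with rfl|rfl <;> simp [dmul, h1]
  · -- inverses
    rintro ⟨a, α⟩
    rcases hz2 α with rfl|rfl
    · exact ⟨(a⁻¹, 0), by simp [dmul], by simp [dmul]⟩
    · refine ⟨((sharp a)⁻¹ * μ⁻¹ * ε⁻¹, 1), ?_, ?_⟩ <;>
        simp only [dmul, Prod.ext_iff] <;> norm_num <;>
        simp only [hanti, hsinv, hinvol, hεf, hμf, mul_assoc]
      · group
      · rw [mul_inv_cancel_left,
          show ε * (μ⁻¹ * ε⁻¹) = μ⁻¹ from by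
            rw [← mul_assoc, hεc, mul_assoc, mul_inv_cancel, mul_one],
          mul_inv_cancel]
  · -- left translations bijective
    rintro ⟨t, α⟩
    rcases hz2 α with rfl|rfl
    · rw [Function.bijective_iff_has_inverse]
      refine ⟨fun c => if c.2 = 0 then (t⁻¹ * c.1, 0) else (c.1 * t⁻¹, 1), ?_, ?_⟩ <;>
        rintro ⟨b, β⟩ <;> rcases hz2 β with rfl|rfl <;> simp [dmul]
    · rw [Function.bijective_iff_has_inverse]
      refine ⟨fun c => if c.2 = 0 then (sharp (ε⁻¹ * (μ⁻¹ * (c.1 * t⁻¹))), 1)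
          else (sharp (t⁻¹ * c.1), 0), ?_, ?_⟩ <;>
        rintro ⟨b, β⟩ <;> rcases hz2 β with rfl|rfl <;>
          simp [dmul, Prod.ext_iff, hinvol] <;>
          simp only [hanti, hsinv, hinvol, hεf, hμf, mul_assoc] <;>
          group
  · -- right translations bijective
    rintro ⟨t, α⟩
    rcases hz2 α with rfl|rfl
    · rw [Function.bijective_iff_has_inverse]
      refine ⟨fun c => if c.2 = 0 then (c.1 * t⁻¹, 0) else (c.1 * (sharp t)⁻¹, 1), ?_, ?_⟩ <;>
        rintro ⟨b, β⟩ <;> rcases hz2 β with rfl|rfl <;> simp [dmul]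
    · rw [Function.bijective_iff_has_inverse]
      refine ⟨fun c => if c.2 = 0 then ((sharp t)⁻¹ * (ε⁻¹ * (μ⁻¹ * c.1)), 1)
          else (t⁻¹ * c.1, 0), ?_, ?_⟩ <;>
        rintro ⟨b, β⟩ <;> rcases hz2 β with rfl|rfl <;>
          simp [dmul, Prod.ext_iff, hinvol] <;>
          simp only [hanti, hsinv, hinvol, hεf, hμf, mul_assoc] <;>
          group
end
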